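/- arXiv:2207.01086 — 4 statements merged into one kernel-verified Lean document; each statement's English description precedes it below -/
import Mathlib

section
/- Let ω be a nonnegative integrable function on [0,1) with moments ω_x = ∫_0^1 r^x ω(r) dr. If there exist constants C > 0 and η > 0 such that ω_x ≤ C (y/x)^η ω_y for all 0 < x ≤ y < ∞, then ω belongs to the class D̂, i.e. there is C' > 1 with ω̂(r) ≤ C' ω̂((1+r)/2) for all r ∈ [0,1). -/
open MeasureTheory

/-- The tail integral of a radial weight. -/
noncomputable def hat (ω : ℝ → ℝ) (r : ℝ) : ℝ := ∫ s in r..1, ω s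

/-- The x-th moment of a radial weight. -/
noncomputable def moment (ω : ℝ → ℝ) (x : ℝ) : ℝ := ∫ r in (0:ℝ)..1, r ^ x * ω r

/-!
Splitting the moment at `t` gives `r ^ x * ω̂(r) ≤ ω_x` and `ω_y ≤ t ^ (y - x) ω_x + ω̂(t)` for
`x ≤ y`. With `y = Λ x`, the hypothesis `ω_x ≤ C Λ^η ω_y` and `Λ` so large that
`C Λ^η e^{-(Λ-1)/2} ≤ 1/2`, this yields `ω_x ≤ 2 C Λ^η ω̂(t)` as soon as `t ^ x ≤ e^{-1/2}`.
For `1/2 ≤ r < 1` take `x = 1/(1-r)` and `t = (1+r)/2`: then `t ^ x ≤ e^{-1/2}` and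
`r ^ x ≥ e^{-2}`, so `ω̂(r) ≤ e² ω_x ≤ 2 e² C Λ^η ω̂((1+r)/2)`. For `r < 1/2` it suffices to
compare `ω̂(0)` with `ω̂(3/4)`, unless `ω̂(3/4) = 0`; but then some moment vanishes and `ω̂ ≡ 0`.
-/

open Real Set Filter Topology

lemma intervalIntegral_nonneg_of_forall_Ioo {f : ℝ → ℝ} {a b : ℝ} (hab : a ≤ b)
    (hf : ∀ x ∈ Ioo a b, 0 ≤ f x) : 0 ≤ ∫ x in a..b, f x := by
  rw [intervalIntegral.integral_of_le hab, integral_Ioc_eq_integral_Ioo]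
  exact setIntegral_nonneg measurableSet_Ioo hf

lemma exists_one_le_mul_pow_mul_exp_le (C : ℝ) (η : ℕ) :
    ∃ Λ ≥ (1 : ℝ), C * Λ ^ η * exp (-(Λ - 1) / 2) ≤ 1 / 2 := by
  have hlim : Tendsto (fun Λ : ℝ => C * exp (1 / 2) * (Λ ^ (η : ℝ) * exp (-(1 / 2) * Λ)))
      atTop (𝓝 0) := by
    simpa using (tendsto_rpow_mul_exp_neg_mul_atTop_nhds_zero η (1 / 2) one_half_pos).const_mul
      (C * exp (1 / 2))
  obtain ⟨Λ, hsmall, hΛ⟩ :=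
    ((hlim.eventually_lt_const one_half_pos).and (eventually_ge_atTop 1)).exists
  refine ⟨Λ, hΛ, le_of_eq_of_le ?_ hsmall.le⟩
  have hexp : exp (-(Λ - 1) / 2) = exp (1 / 2) * exp (-(1 / 2) * Λ) := by
    rw [← exp_add]
    ring_nf
  rw [rpow_natCast, hexp]
  ring

lemma rpow_inv_one_sub_le_exp {r : ℝ} (h₁ : -1 < r) (h₂ : r < 1) :
    ((1 + r) / 2) ^ (1 - r)⁻¹ ≤ exp (-(1 / 2)) := by
  rw [rpow_def_of_pos (by linarith), exp_le_exp, ← div_eq_mul_inv, div_le_iff₀ (by linarith)]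
  linarith [log_le_sub_one_of_pos (show 0 < (1 + r) / 2 by linarith)]

lemma exp_neg_two_le_rpow_inv_one_sub {r : ℝ} (h₁ : 1 / 2 ≤ r) (h₂ : r < 1) :
    exp (-2) ≤ r ^ (1 - r)⁻¹ := by
  have hr : 0 < r := by linarith
  rw [rpow_def_of_pos hr, exp_le_exp, ← div_eq_mul_inv, le_div_iff₀ (by linarith)]
  have hinv : r⁻¹ ≤ 3 - 2 * r := by
    rw [inv_le_iff_one_le_mul₀' hr]
    nlinarith
  linarith [one_sub_inv_le_log_of_pos hr]

section Weight

variable {ω : ℝ → ℝ}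

lemma intervalIntegrable_of_mem_Icc (hint : IntervalIntegrable ω volume 0 1) {a b : ℝ}
    (ha : a ∈ Icc (0 : ℝ) 1) (hb : b ∈ Icc (0 : ℝ) 1) : IntervalIntegrable ω volume a b :=
  hint.mono_set (uIcc_subset_uIcc (by rwa [uIcc_of_le zero_le_one])
    (by rwa [uIcc_of_le zero_le_one]))

lemma intervalIntegrable_rpow_mul (hint : IntervalIntegrable ω volume 0 1) {x a b : ℝ}
    (hx : 0 ≤ x) (ha : a ∈ Icc (0 : ℝ) 1) (hb : b ∈ Icc (0 : ℝ) 1) :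
    IntervalIntegrable (fun s => s ^ x * ω s) volume a b :=
  (intervalIntegrable_of_mem_Icc hint ha hb).continuousOn_mul
    (continuous_rpow_const hx).continuousOn

lemma hat_nonneg (hω : ∀ r ∈ Ioo (0 : ℝ) 1, 0 ≤ ω r) {r : ℝ} (hr : r ∈ Icc (0 : ℝ) 1) :
    0 ≤ hat ω r :=
  intervalIntegral_nonneg_of_forall_Ioo hr.2 fun s hs => hω s ⟨hr.1.trans_lt hs.1, hs.2⟩

lemma integral_rpow_mul_nonneg (hω : ∀ r ∈ Ioo (0 : ℝ) 1, 0 ≤ ω r) (x : ℝ) {a b : ℝ}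
    (ha : 0 ≤ a) (hab : a ≤ b) (hb : b ≤ 1) : 0 ≤ ∫ s in a..b, s ^ x * ω s :=
  intervalIntegral_nonneg_of_forall_Ioo hab fun s hs =>
    mul_nonneg (rpow_nonneg (ha.trans hs.1.le) x) (hω s ⟨ha.trans_lt hs.1, hs.2.trans_le hb⟩)

lemma moment_nonneg (hω : ∀ r ∈ Ioo (0 : ℝ) 1, 0 ≤ ω r) (x : ℝ) : 0 ≤ moment ω x :=
  integral_rpow_mul_nonneg hω x le_rfl zero_le_one le_rfl

lemma moment_eq_integral_add_integral (hint : IntervalIntegrable ω volume 0 1) {x t : ℝ}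
    (hx : 0 ≤ x) (ht : t ∈ Icc (0 : ℝ) 1) :
    moment ω x = (∫ s in (0 : ℝ)..t, s ^ x * ω s) + ∫ s in t..1, s ^ x * ω s :=
  (intervalIntegral.integral_add_adjacent_intervals
    (intervalIntegrable_rpow_mul hint hx (left_mem_Icc.2 zero_le_one) ht)
    (intervalIntegrable_rpow_mul hint hx ht (right_mem_Icc.2 zero_le_one))).symm

lemma hat_antitoneOn (hω : ∀ r ∈ Ioo (0 : ℝ) 1, 0 ≤ ω r)
    (hint : IntervalIntegrable ω volume 0 1) : AntitoneOn (hat ω) (Icc 0 1) := by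
  intro a ha b hb hab
  rw [hat, hat, ← intervalIntegral.integral_add_adjacent_intervals
    (intervalIntegrable_of_mem_Icc hint ha hb)
    (intervalIntegrable_of_mem_Icc hint hb (right_mem_Icc.2 zero_le_one))]
  have := intervalIntegral_nonneg_of_forall_Ioo hab fun s hs =>
    hω s ⟨ha.1.trans_lt hs.1, hs.2.trans_le hb.2⟩
  linarith

lemma rpow_mul_hat_le_moment (hω : ∀ r ∈ Ioo (0 : ℝ) 1, 0 ≤ ω r)
    (hint : IntervalIntegrable ω volume 0 1) {x r : ℝ} (hx : 0 ≤ x) (hr : r ∈ Icc (0 : ℝ) 1) :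
    r ^ x * hat ω r ≤ moment ω x := by
  have htail : ∫ s in r..1, r ^ x * ω s ≤ ∫ s in r..1, s ^ x * ω s :=
    intervalIntegral.integral_mono_on_of_le_Ioo hr.2
      ((intervalIntegrable_of_mem_Icc hint hr (right_mem_Icc.2 zero_le_one)).const_mul _)
      (intervalIntegrable_rpow_mul hint hx hr (right_mem_Icc.2 zero_le_one)) fun s hs =>
      mul_le_mul_of_nonneg_right (rpow_le_rpow hr.1 hs.1.le hx) (hω s ⟨hr.1.trans_lt hs.1, hs.2⟩)
  have hconst : ∫ s in r..1, r ^ x * ω s = r ^ x * hat ω r :=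
    intervalIntegral.integral_const_mul _ _
  linarith [moment_eq_integral_add_integral hint hx hr,
    integral_rpow_mul_nonneg hω x le_rfl hr.1 hr.2]

lemma moment_le_rpow_sub_mul_moment_add_hat (hω : ∀ r ∈ Ioo (0 : ℝ) 1, 0 ≤ ω r)
    (hint : IntervalIntegrable ω volume 0 1) {x y t : ℝ} (hx : 0 ≤ x) (hxy : x ≤ y)
    (ht : t ∈ Icc (0 : ℝ) 1) : moment ω y ≤ t ^ (y - x) * moment ω x + hat ω t := by
  have hy := hx.trans hxy
  have h1 : (1 : ℝ) ∈ Icc (0 : ℝ) 1 := right_mem_Icc.2 zero_le_one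
  have hhead : ∫ s in (0 : ℝ)..t, s ^ y * ω s ≤ t ^ (y - x) * ∫ s in (0 : ℝ)..t, s ^ x * ω s := by
    rw [← intervalIntegral.integral_const_mul]
    refine intervalIntegral.integral_mono_on_of_le_Ioo ht.1
      (intervalIntegrable_rpow_mul hint hy (left_mem_Icc.2 zero_le_one) ht)
      ((intervalIntegrable_rpow_mul hint hx (left_mem_Icc.2 zero_le_one) ht).const_mul _)
      fun s hs => ?_
    have hωs : 0 ≤ ω s := hω s ⟨hs.1, hs.2.trans_le ht.2⟩
    calc s ^ y * ω s = s ^ (y - x) * (s ^ x * ω s) := by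
          rw [← mul_assoc, ← rpow_add hs.1, sub_add_cancel]
      _ ≤ t ^ (y - x) * (s ^ x * ω s) :=
          mul_le_mul_of_nonneg_right (rpow_le_rpow hs.1.le hs.2.le (sub_nonneg.2 hxy))
            (mul_nonneg (rpow_nonneg hs.1.le x) hωs)
  have htail : ∫ s in t..1, s ^ y * ω s ≤ hat ω t :=
    intervalIntegral.integral_mono_on_of_le_Ioo ht.2 (intervalIntegrable_rpow_mul hint hy ht h1)
      (intervalIntegrable_of_mem_Icc hint ht h1) fun s hs =>
      mul_le_of_le_one_left (hω s ⟨ht.1.trans_lt hs.1, hs.2⟩)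
        (rpow_le_one (ht.1.trans hs.1.le) hs.2.le hy)
  have hhead_le : ∫ s in (0 : ℝ)..t, s ^ x * ω s ≤ moment ω x := by
    linarith [moment_eq_integral_add_integral hint hx ht,
      integral_rpow_mul_nonneg hω x ht.1 ht.2 le_rfl]
  have hmono := mul_le_mul_of_nonneg_left hhead_le (rpow_nonneg ht.1 (y - x))
  linarith [moment_eq_integral_add_integral hint hy ht]

lemma moment_le_two_mul_hat (hω : ∀ r ∈ Ioo (0 : ℝ) 1, 0 ≤ ω r)
    (hint : IntervalIntegrable ω volume 0 1) {K x y t : ℝ} (hK : 0 ≤ K) (hx : 0 ≤ x) (hxy : x ≤ y)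
    (ht : t ∈ Icc (0 : ℝ) 1) (hdoubling : moment ω x ≤ K * moment ω y)
    (hsmall : K * t ^ (y - x) ≤ 1 / 2) : moment ω x ≤ 2 * K * hat ω t := by
  have hsplit := mul_le_mul_of_nonneg_left
    (moment_le_rpow_sub_mul_moment_add_hat hω hint hx hxy ht) hK
  have habsorb := mul_le_mul_of_nonneg_right hsmall (moment_nonneg hω x)
  linarith

lemma exists_moment_le_mul_hat (hω : ∀ r ∈ Ioo (0 : ℝ) 1, 0 ≤ ω r)
    (hint : IntervalIntegrable ω volume 0 1)
    (h : ∃ C > 0, ∃ η > 0, ∀ x y : ℝ, 0 < x → x ≤ y →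
      moment ω x ≤ C * (y / x) ^ η * moment ω y) :
    ∃ K > 0, ∀ x > 0, ∀ t ∈ Icc (0 : ℝ) 1, t ^ x ≤ exp (-(1 / 2)) →
      moment ω x ≤ K * hat ω t := by
  obtain ⟨C, hC, η, -, hmoment⟩ := h
  obtain ⟨Λ, hΛ, hsmall⟩ := exists_one_le_mul_pow_mul_exp_le C η
  refine ⟨2 * (C * Λ ^ η), by positivity, fun x hx t ht htx => ?_⟩
  have hxΛx : x ≤ Λ * x := le_mul_of_one_le_left hx.le hΛ
  refine moment_le_two_mul_hat hω hint (K := C * Λ ^ η) (by positivity) hx.le hxΛx ht ?_ ?_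
  · simpa [mul_div_assoc, hx.ne'] using hmoment x (Λ * x) hx hxΛx
  · calc C * Λ ^ η * t ^ (Λ * x - x) = C * Λ ^ η * (t ^ x) ^ (Λ - 1) := by
          rw [← rpow_mul ht.1]
          ring_nf
      _ ≤ C * Λ ^ η * exp (-(1 / 2)) ^ (Λ - 1) := by
          gcongr
          exact rpow_nonneg ht.1 x
      _ = C * Λ ^ η * exp (-(Λ - 1) / 2) := by
          rw [← exp_mul]
          ring_nf
      _ ≤ 1 / 2 := hsmall

lemma hat_le_mul_hat_of_half_le (hω : ∀ r ∈ Ioo (0 : ℝ) 1, 0 ≤ ω r)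
    (hint : IntervalIntegrable ω volume 0 1) {K : ℝ}
    (hkey : ∀ x > 0, ∀ t ∈ Icc (0 : ℝ) 1, t ^ x ≤ exp (-(1 / 2)) → moment ω x ≤ K * hat ω t)
    {r : ℝ} (hr : r ∈ Ico (1 / 2 : ℝ) 1) : hat ω r ≤ K * exp 2 * hat ω ((1 + r) / 2) := by
  obtain ⟨hr₁, hr₂⟩ := hr
  have hx : 0 < (1 - r)⁻¹ := inv_pos.2 (by linarith)
  have hr' : r ∈ Icc (0 : ℝ) 1 := ⟨by linarith, hr₂.le⟩
  have hlower : exp (-2) * hat ω r ≤ moment ω (1 - r)⁻¹ :=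
    (mul_le_mul_of_nonneg_right (exp_neg_two_le_rpow_inv_one_sub hr₁ hr₂)
      (hat_nonneg hω hr')).trans (rpow_mul_hat_le_moment hω hint hx.le hr')
  have hupper := hkey _ hx ((1 + r) / 2) ⟨by linarith, by linarith⟩
    (rpow_inv_one_sub_le_exp (by linarith) hr₂)
  calc hat ω r = exp 2 * (exp (-2) * hat ω r) := by
        rw [← mul_assoc, ← exp_add]
        simp
    _ ≤ exp 2 * (K * hat ω ((1 + r) / 2)) :=
        mul_le_mul_of_nonneg_left (hlower.trans hupper) (exp_pos 2).le
    _ = K * exp 2 * hat ω ((1 + r) / 2) := by ring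

lemma hat_le_div_mul_hat (hω : ∀ r ∈ Ioo (0 : ℝ) 1, 0 ≤ ω r)
    (hint : IntervalIntegrable ω volume 0 1) {c r s : ℝ} (hc : c ∈ Icc (0 : ℝ) 1)
    (hpos : 0 < hat ω c) (hr : r ∈ Icc (0 : ℝ) 1) (hs₀ : 0 ≤ s) (hsc : s ≤ c) :
    hat ω r ≤ hat ω 0 / hat ω c * hat ω s := by
  have hs : s ∈ Icc (0 : ℝ) 1 := ⟨hs₀, hsc.trans hc.2⟩
  calc hat ω r ≤ hat ω 0 := hat_antitoneOn hω hint (left_mem_Icc.2 zero_le_one) hr hr.1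
    _ = hat ω 0 / hat ω c * hat ω c := (div_mul_cancel₀ _ hpos.ne').symm
    _ ≤ hat ω 0 / hat ω c * hat ω s :=
        mul_le_mul_of_nonneg_left (hat_antitoneOn hω hint hs hc hsc)
          (div_nonneg (hat_nonneg hω (left_mem_Icc.2 zero_le_one)) hpos.le)

lemma hat_eq_zero_of_moment_eq_zero (hω : ∀ r ∈ Ioo (0 : ℝ) 1, 0 ≤ ω r)
    (hint : IntervalIntegrable ω volume 0 1) {x : ℝ} (hx : 0 ≤ x) (h : moment ω x = 0) :
    EqOn (hat ω) 0 (Icc 0 1) := by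
  have hIoc : EqOn (hat ω) 0 (Ioc 0 1) := fun r hr => by
    have hr' : r ∈ Icc (0 : ℝ) 1 := Ioc_subset_Icc_self hr
    have hle : r ^ x * hat ω r ≤ r ^ x * 0 := by
      simpa [h] using rpow_mul_hat_le_moment hω hint hx hr'
    exact le_antisymm (le_of_mul_le_mul_left hle (rpow_pos_of_pos hr.1 x)) (hat_nonneg hω hr')
  have hcont : ContinuousOn (hat ω) (Icc 0 1) := by
    rw [← uIcc_of_le zero_le_one]
    exact intervalIntegral.continuousOn_primitive_interval_left
      ((intervalIntegrable_iff' (a := 0) (b := 1)).1 hint)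
  exact hIoc.of_subset_closure hcont continuousOn_const Ioc_subset_Icc_self
    (closure_Ioc zero_ne_one).ge

lemma hat_eqOn_zero_of_hat_three_quarters_eq_zero (hω : ∀ r ∈ Ioo (0 : ℝ) 1, 0 ≤ ω r)
    (hint : IntervalIntegrable ω volume 0 1) {K : ℝ}
    (hkey : ∀ x > 0, ∀ t ∈ Icc (0 : ℝ) 1, t ^ x ≤ exp (-(1 / 2)) → moment ω x ≤ K * hat ω t)
    (hzero : hat ω (3 / 4) = 0) : EqOn (hat ω) 0 (Icc 0 1) := by
  -- `(3/4)^4 ≤ 1/2 ≤ e^{-1/2}`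
  have hfour : (3 / 4 : ℝ) ^ (4 : ℝ) ≤ exp (-(1 / 2)) := by
    rw [show (4 : ℝ) = (4 : ℕ) by norm_num, rpow_natCast]
    linarith [add_one_le_exp (-(1 / 2))]
  refine hat_eq_zero_of_moment_eq_zero hω hint (x := 4) (by norm_num)
    (le_antisymm ?_ (moment_nonneg hω 4))
  simpa [hzero] using hkey 4 (by norm_num) (3 / 4) ⟨by norm_num, by norm_num⟩ hfour

lemma hat_le_max_mul_hat (hω : ∀ r ∈ Ioo (0 : ℝ) 1, 0 ≤ ω r)
    (hint : IntervalIntegrable ω volume 0 1) {K : ℝ}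
    (hkey : ∀ x > 0, ∀ t ∈ Icc (0 : ℝ) 1, t ^ x ≤ exp (-(1 / 2)) → moment ω x ≤ K * hat ω t)
    (hpos : 0 < hat ω (3 / 4)) {r : ℝ} (hr : r ∈ Ico (0 : ℝ) 1) :
    hat ω r ≤ max (K * exp 2) (hat ω 0 / hat ω (3 / 4)) * hat ω ((1 + r) / 2) := by
  obtain ⟨hr₀, hr₁⟩ := hr
  have hmid : 0 ≤ hat ω ((1 + r) / 2) := hat_nonneg hω ⟨by linarith, by linarith⟩
  rcases lt_or_ge r (1 / 2) with hsmall | hlarge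
  · exact (hat_le_div_mul_hat hω hint ⟨by norm_num, by norm_num⟩ hpos ⟨hr₀, hr₁.le⟩
      (by linarith) (by linarith)).trans (mul_le_mul_of_nonneg_right (le_max_right _ _) hmid)
  · exact (hat_le_mul_hat_of_half_le hω hint hkey ⟨hlarge, hr₁⟩).trans
      (mul_le_mul_of_nonneg_right (le_max_left _ _) hmid)

end Weight

theorem moment_bound_implies_Dhat (ω : ℝ → ℝ)
    (hω_nonneg : ∀ r ∈ Set.Ico (0:ℝ) 1, 0 ≤ ω r)
    (hω_int : IntervalIntegrable ω volume 0 1)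
    (h : ∃ C > 0, ∃ η > 0, ∀ x y : ℝ, 0 < x → x ≤ y →
      moment ω x ≤ C * (y / x) ^ η * moment ω y) :
    ∃ C' > 1, ∀ r ∈ Set.Ico (0:ℝ) 1, hat ω r ≤ C' * hat ω ((1 + r) / 2) := by
  have hω : ∀ r ∈ Ioo (0 : ℝ) 1, 0 ≤ ω r := fun r hr => hω_nonneg r (Ioo_subset_Ico_self hr)
  obtain ⟨K, hK, hkey⟩ := exists_moment_le_mul_hat hω hω_int h
  rcases (hat_nonneg hω (⟨by norm_num, by norm_num⟩ : (3 / 4 : ℝ) ∈ Icc 0 1)).eq_or_lt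
    with hzero | hpos
  · have hvanish := hat_eqOn_zero_of_hat_three_quarters_eq_zero hω hω_int hkey hzero.symm
    refine ⟨2, one_lt_two, fun r ⟨hr₀, hr₁⟩ => ?_⟩
    rw [hvanish ⟨hr₀, hr₁.le⟩, hvanish ⟨by linarith, by linarith⟩]
    simp
  · set c := max (K * exp 2) (hat ω 0 / hat ω (3 / 4))
    have hc : 0 < c := lt_max_of_lt_left (by positivity)
    refine ⟨c + 1, by linarith, fun r hr => (hat_le_max_mul_hat hω hω_int hkey hpos hr).trans ?_⟩
    exact mul_le_mul_of_nonneg_right (by linarith)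
      (hat_nonneg hω ⟨by linarith [hr.1], by linarith [hr.2]⟩)
end

section
/- Let ω and ν be radial weights with ω ∈ D and ν ∈ D̂. Then the weight ω(r)·ν̂(r) belongs to D, and there exist constants c, C > 0 such that c ω̂(r) ν̂(r) ≤ ∫_r^1 ω(s) ν̂(s) ds ≤ C ω̂(r) ν̂(r) for all r ∈ [0,1). -/
open MeasureTheory

/-- The class D̂ of radial weights. -/
def Dhat (ω : ℝ → ℝ) : Prop :=
  ∃ C > 1, ∀ r ∈ Set.Ico (0:ℝ) 1, hat ω r ≤ C * hat ω ((1 + r) / 2)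

/-- The class Ď of radial weights. -/
def Dcheck (ω : ℝ → ℝ) : Prop :=
  ∃ K > 1, ∃ C > 1, ∀ r ∈ Set.Ico (0:ℝ) 1, C * hat ω (1 - (1 - r) / K) ≤ hat ω r

/-- The class D = D̂ ∩ Ď. -/
def Dclass (ω : ℝ → ℝ) : Prop := Dhat ω ∧ Dcheck ω

/-!
Since `ν̂` is decreasing, `∫_r^1 ω ν̂ ≤ ω̂(r) ν̂(r)`. Conversely, with `t = 1 - (1 - r)/K` from
`ω ∈ Ď`, the piece `∫_r^t ω` carries a fixed proportion of `ω̂(r)`, while `ν ∈ D̂` makes `ν̂(t)`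
comparable to `ν̂(r)`; so `∫_r^1 ω ν̂ ≥ ∫_r^t ω ν̂ ≥ (∫_r^t ω) ν̂(t) ≳ ω̂(r) ν̂(r)`.
Both doubling conditions pass from `ω̂` and `ν̂` to the product `ω̂ ν̂`, hence to any weight whose
tail is comparable to it.
-/

open Set

structure IsRadialWeight (ω : ℝ → ℝ) : Prop where
  nonneg : ∀ r ∈ Ico (0:ℝ) 1, 0 ≤ ω r
  intervalIntegrable : IntervalIntegrable ω volume 0 1

lemma le_one_sub_div {r K : ℝ} (hr : r < 1) (hK : 1 ≤ K) : r ≤ 1 - (1 - r) / K := by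
  have : (1 - r) / K ≤ 1 - r := div_le_self (by linarith) hK
  linarith

lemma one_sub_div_mem_Ico {r K : ℝ} (hr : r ∈ Ico (0:ℝ) 1) (hK : 1 ≤ K) :
    1 - (1 - r) / K ∈ Ico (0:ℝ) 1 := by
  have : 0 < (1 - r) / K := div_pos (by linarith [hr.2]) (by linarith)
  exact ⟨hr.1.trans (le_one_sub_div hr.2 hK), by linarith⟩

lemma one_sub_div_le_one_sub_div {r K L : ℝ} (hr : r ≤ 1) (hK : 0 < K) (hKL : K ≤ L) :
    1 - (1 - r) / K ≤ 1 - (1 - r) / L := by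
  have : (1 - r) / L ≤ (1 - r) / K := div_le_div_of_nonneg_left (by linarith) hK hKL
  linarith

lemma one_sub_div_one_sub_div (r K L : ℝ) :
    1 - (1 - (1 - (1 - r) / K)) / L = 1 - (1 - r) / (K * L) := by
  rw [sub_sub_cancel, div_div]

namespace IsRadialWeight

variable {ω ν : ℝ → ℝ} {a b r : ℝ}

lemma intervalIntegrable_of_le (hω : IsRadialWeight ω) (ha : 0 ≤ a) (hab : a ≤ b) (hb : b ≤ 1) :
    IntervalIntegrable ω volume a b :=
  hω.intervalIntegrable.mono_set <| by
    rw [uIcc_of_le hab, uIcc_of_le zero_le_one]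
    exact Icc_subset_Icc ha hb

lemma integral_nonneg (hω : IsRadialWeight ω) (ha : 0 ≤ a) (hab : a ≤ b) (hb : b ≤ 1) :
    0 ≤ ∫ s in a..b, ω s := by
  simpa using intervalIntegral.integral_mono_on_of_le_Ioo hab intervalIntegrable_const
    (hω.intervalIntegrable_of_le ha hab hb)
    fun s hs => hω.nonneg s ⟨ha.trans hs.1.le, hs.2.trans_le hb⟩

lemma integral_add_hat (hω : IsRadialWeight ω) (ha : 0 ≤ a) (hab : a ≤ b) (hb : b ≤ 1) :
    (∫ s in a..b, ω s) + hat ω b = hat ω a :=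
  intervalIntegral.integral_add_adjacent_intervals (hω.intervalIntegrable_of_le ha hab hb)
    (hω.intervalIntegrable_of_le (ha.trans hab) hb le_rfl)

lemma hat_le_hat (hω : IsRadialWeight ω) (ha : 0 ≤ a) (hab : a ≤ b) (hb : b ≤ 1) :
    hat ω b ≤ hat ω a := by
  linarith [hω.integral_add_hat ha hab hb, hω.integral_nonneg ha hab hb]

lemma hat_nonneg (hω : IsRadialWeight ω) (hr : 0 ≤ r) (hr1 : r ≤ 1) : 0 ≤ hat ω r :=
  hω.integral_nonneg hr hr1 le_rfl

lemma continuousOn_hat (hω : IsRadialWeight ω) : ContinuousOn (hat ω) (Icc 0 1) := by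
  have h := intervalIntegral.continuousOn_primitive_interval_left (μ := volume) (f := ω)
    (a := 0) (b := 1)
  rw [uIcc_of_le zero_le_one] at h
  exact h ((intervalIntegrable_iff_integrableOn_Icc_of_le zero_le_one).1 hω.intervalIntegrable)

lemma mul_hat (hω : IsRadialWeight ω) (hν : IsRadialWeight ν) :
    IsRadialWeight fun r => ω r * hat ν r where
  nonneg r hr := mul_nonneg (hω.nonneg r hr) (hν.hat_nonneg hr.1 hr.2.le)
  intervalIntegrable := hω.intervalIntegrable.mul_continuousOn <| by
    rw [uIcc_of_le zero_le_one]
    exact hν.continuousOn_hat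

lemma hat_mul_hat_le (hω : IsRadialWeight ω) (hν : IsRadialWeight ν) (hr : 0 ≤ r) (hr1 : r ≤ 1) :
    hat (fun s => ω s * hat ν s) r ≤ hat ω r * hat ν r := by
  rw [hat, hat, ← intervalIntegral.integral_mul_const]
  refine intervalIntegral.integral_mono_on_of_le_Ioo hr1
    ((hω.mul_hat hν).intervalIntegrable_of_le hr hr1 le_rfl)
    ((hω.intervalIntegrable_of_le hr hr1 le_rfl).mul_const _) fun s hs => ?_
  exact mul_le_mul_of_nonneg_left (hν.hat_le_hat hr hs.1.le hs.2.le)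
    (hω.nonneg s ⟨hr.trans hs.1.le, hs.2⟩)

lemma integral_mul_hat_le_hat_mul_hat (hω : IsRadialWeight ω) (hν : IsRadialWeight ν)
    (ha : 0 ≤ a) (hab : a ≤ b) (hb : b ≤ 1) :
    (∫ s in a..b, ω s) * hat ν b ≤ hat (fun s => ω s * hat ν s) a := by
  have hΦ := hω.mul_hat hν
  have hpiece : (∫ s in a..b, ω s) * hat ν b ≤ ∫ s in a..b, ω s * hat ν s := by
    rw [← intervalIntegral.integral_mul_const]
    refine intervalIntegral.integral_mono_on_of_le_Ioo hab
      ((hω.intervalIntegrable_of_le ha hab hb).mul_const _)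
      (hΦ.intervalIntegrable_of_le ha hab hb) fun s hs => ?_
    exact mul_le_mul_of_nonneg_left (hν.hat_le_hat (ha.trans hs.1.le) hs.2.le hb)
      (hω.nonneg s ⟨ha.trans hs.1.le, hs.2.trans_le hb⟩)
  linarith [hΦ.integral_add_hat ha hab hb, hΦ.hat_nonneg (ha.trans hab) hb]

end IsRadialWeight

variable {ω ν Φ g : ℝ → ℝ}

lemma hat_le_pow_mul_hat_of_doubling {C : ℝ} (hC : 0 ≤ C)
    (h : ∀ r ∈ Ico (0:ℝ) 1, hat ν r ≤ C * hat ν ((1 + r) / 2)) (n : ℕ) :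
    ∀ r ∈ Ico (0:ℝ) 1, hat ν r ≤ C ^ n * hat ν (1 - (1 - r) / 2 ^ n) := by
  induction n with
  | zero => intro r _; simp
  | succ n ih =>
    intro r hr
    have hstep := h (1 - (1 - r) / 2 ^ n) (one_sub_div_mem_Ico hr (one_le_pow₀ one_le_two))
    rw [show (1 + (1 - (1 - r) / 2 ^ n)) / 2 = 1 - (1 - (1 - (1 - r) / 2 ^ n)) / 2 by ring,
      one_sub_div_one_sub_div, ← pow_succ] at hstep
    calc hat ν r ≤ C ^ n * hat ν (1 - (1 - r) / 2 ^ n) := ih r hr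
      _ ≤ C ^ n * (C * hat ν (1 - (1 - r) / 2 ^ (n + 1))) := by gcongr
      _ = C ^ (n + 1) * hat ν (1 - (1 - r) / 2 ^ (n + 1)) := by ring

lemma Dhat.exists_hat_le_mul_hat (hν : IsRadialWeight ν) (h : Dhat ν) {K : ℝ} (hK : 1 ≤ K) :
    ∃ B > 0, ∀ r ∈ Ico (0:ℝ) 1, hat ν r ≤ B * hat ν (1 - (1 - r) / K) := by
  obtain ⟨C, hC, hdoubling⟩ := h
  obtain ⟨n, hn⟩ := pow_unbounded_of_one_lt K one_lt_two
  refine ⟨C ^ n, by positivity, fun r hr => ?_⟩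
  have ht := one_sub_div_mem_Ico hr hK
  calc hat ν r ≤ C ^ n * hat ν (1 - (1 - r) / 2 ^ n) :=
        hat_le_pow_mul_hat_of_doubling (by positivity) hdoubling n r hr
    _ ≤ C ^ n * hat ν (1 - (1 - r) / K) := by
        gcongr
        exact hν.hat_le_hat ht.1 (one_sub_div_le_one_sub_div hr.2.le (by linarith) hn.le)
          (one_sub_div_mem_Ico hr (one_le_pow₀ one_le_two)).2.le

lemma pow_mul_hat_le_of_reverse_doubling {K C : ℝ} (hK : 1 ≤ K) (hC : 0 ≤ C)
    (h : ∀ r ∈ Ico (0:ℝ) 1, C * hat ω (1 - (1 - r) / K) ≤ hat ω r) (m : ℕ) :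
    ∀ r ∈ Ico (0:ℝ) 1, C ^ m * hat ω (1 - (1 - r) / K ^ m) ≤ hat ω r := by
  induction m with
  | zero => intro r _; simp
  | succ m ih =>
    intro r hr
    have hstep := h (1 - (1 - r) / K ^ m) (one_sub_div_mem_Ico hr (one_le_pow₀ hK))
    rw [one_sub_div_one_sub_div, ← pow_succ] at hstep
    calc C ^ (m + 1) * hat ω (1 - (1 - r) / K ^ (m + 1))
        = C ^ m * (C * hat ω (1 - (1 - r) / K ^ (m + 1))) := by ring
      _ ≤ C ^ m * hat ω (1 - (1 - r) / K ^ m) := by gcongr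
      _ ≤ hat ω r := ih r hr

lemma Dcheck.exists_mul_hat_le (hω : IsRadialWeight ω) (h : Dcheck ω) (D : ℝ) :
    ∃ K > 1, ∀ r ∈ Ico (0:ℝ) 1, D * hat ω (1 - (1 - r) / K) ≤ hat ω r := by
  obtain ⟨K, hK, C, hC, hreverse⟩ := h
  obtain ⟨m, hm⟩ := pow_unbounded_of_one_lt D hC
  refine ⟨K ^ (m + 1), one_lt_pow₀ hK m.succ_ne_zero, fun r hr => ?_⟩
  have hD : D ≤ C ^ (m + 1) := hm.le.trans (pow_le_pow_right₀ hC.le m.le_succ)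
  calc D * hat ω (1 - (1 - r) / K ^ (m + 1))
      ≤ C ^ (m + 1) * hat ω (1 - (1 - r) / K ^ (m + 1)) := by
        gcongr
        have ht := one_sub_div_mem_Ico hr (one_le_pow₀ hK.le (n := m + 1))
        exact hω.hat_nonneg ht.1 ht.2.le
    _ ≤ hat ω r := pow_mul_hat_le_of_reverse_doubling hK.le (by positivity) hreverse _ r hr

lemma Dhat.exists_hat_mul_hat_le (hω : IsRadialWeight ω) (hν : IsRadialWeight ν) (h₁ : Dhat ω)
    (h₂ : Dhat ν) : ∃ A ≥ 0, ∀ r ∈ Ico (0:ℝ) 1,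
      hat ω r * hat ν r ≤ A * (hat ω ((1 + r) / 2) * hat ν ((1 + r) / 2)) := by
  obtain ⟨C₁, hC₁, h₁⟩ := h₁
  obtain ⟨C₂, hC₂, h₂⟩ := h₂
  refine ⟨C₁ * C₂, by positivity, fun r hr => ?_⟩
  have hm : (1 + r) / 2 ∈ Ico (0:ℝ) 1 := ⟨by linarith [hr.1], by linarith [hr.2]⟩
  calc hat ω r * hat ν r ≤ (C₁ * hat ω ((1 + r) / 2)) * (C₂ * hat ν ((1 + r) / 2)) :=
        mul_le_mul (h₁ r hr) (h₂ r hr) (hν.hat_nonneg hr.1 hr.2.le)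
          (mul_nonneg (by positivity) (hω.hat_nonneg hm.1 hm.2.le))
    _ = C₁ * C₂ * (hat ω ((1 + r) / 2) * hat ν ((1 + r) / 2)) := by ring

lemma Dcheck.exists_mul_hat_mul_hat_le (hω : IsRadialWeight ω) (hν : IsRadialWeight ν)
    (h : Dcheck ω) (D : ℝ) : ∃ K > 1, ∀ r ∈ Ico (0:ℝ) 1,
      D * (hat ω (1 - (1 - r) / K) * hat ν (1 - (1 - r) / K)) ≤ hat ω r * hat ν r := by
  obtain ⟨K, hK, hreverse⟩ := h.exists_mul_hat_le hω D
  refine ⟨K, hK, fun r hr => ?_⟩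
  have ht := one_sub_div_mem_Ico hr hK.le
  calc D * (hat ω (1 - (1 - r) / K) * hat ν (1 - (1 - r) / K))
      = (D * hat ω (1 - (1 - r) / K)) * hat ν (1 - (1 - r) / K) := by ring
    _ ≤ hat ω r * hat ν (1 - (1 - r) / K) :=
        mul_le_mul_of_nonneg_right (hreverse r hr) (hν.hat_nonneg ht.1 ht.2.le)
    _ ≤ hat ω r * hat ν r :=
        mul_le_mul_of_nonneg_left (hν.hat_le_hat hr.1 (le_one_sub_div hr.2 hK.le) ht.2.le)
          (hω.hat_nonneg hr.1 hr.2.le)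

lemma Dhat.of_hat_comparable (hΦ : IsRadialWeight Φ) {c C A : ℝ} (hc : 0 < c) (hC : 0 ≤ C)
    (hA : 0 ≤ A) (hlow : ∀ r ∈ Ico (0:ℝ) 1, c * g r ≤ hat Φ r)
    (hup : ∀ r ∈ Ico (0:ℝ) 1, hat Φ r ≤ C * g r)
    (hg : ∀ r ∈ Ico (0:ℝ) 1, g r ≤ A * g ((1 + r) / 2)) : Dhat Φ := by
  refine ⟨max 2 (C * A / c), lt_max_of_lt_left one_lt_two, fun r hr => ?_⟩
  have hm : (1 + r) / 2 ∈ Ico (0:ℝ) 1 := ⟨by linarith [hr.1], by linarith [hr.2]⟩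
  calc hat Φ r ≤ C * g r := hup r hr
    _ ≤ C * (A * g ((1 + r) / 2)) := mul_le_mul_of_nonneg_left (hg r hr) hC
    _ = C * A / c * (c * g ((1 + r) / 2)) := by field_simp
    _ ≤ C * A / c * hat Φ ((1 + r) / 2) := by gcongr; exact hlow _ hm
    _ ≤ max 2 (C * A / c) * hat Φ ((1 + r) / 2) := by
        gcongr
        · exact hΦ.hat_nonneg hm.1 hm.2.le
        · exact le_max_right _ _

lemma Dcheck.of_hat_comparable {c C : ℝ} (hc : 0 < c)
    (hlow : ∀ r ∈ Ico (0:ℝ) 1, c * g r ≤ hat Φ r)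
    (hup : ∀ r ∈ Ico (0:ℝ) 1, hat Φ r ≤ C * g r)
    (hg : ∀ D, ∃ K > 1, ∀ r ∈ Ico (0:ℝ) 1, D * g (1 - (1 - r) / K) ≤ g r) : Dcheck Φ := by
  obtain ⟨K, hK, hreverse⟩ := hg (2 * C / c)
  refine ⟨K, hK, 2, one_lt_two, fun r hr => ?_⟩
  calc 2 * hat Φ (1 - (1 - r) / K) ≤ 2 * (C * g (1 - (1 - r) / K)) := by
        gcongr; exact hup _ (one_sub_div_mem_Ico hr hK.le)
    _ = c * (2 * C / c * g (1 - (1 - r) / K)) := by field_simp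
    _ ≤ c * g r := by gcongr; exact hreverse r hr
    _ ≤ hat Φ r := hlow r hr

lemma exists_mul_hat_mul_hat_le_hat_mul_hat (hω : IsRadialWeight ω) (hν : IsRadialWeight ν)
    (h₁ : Dcheck ω) (h₂ : Dhat ν) : ∃ c > 0, ∀ r ∈ Ico (0:ℝ) 1,
      c * (hat ω r * hat ν r) ≤ hat (fun s => ω s * hat ν s) r := by
  obtain ⟨K, hK, C, hC, hreverse⟩ := h₁
  obtain ⟨B, hB, hdoubling⟩ := h₂.exists_hat_le_mul_hat hν hK.le
  have hC₀ : 0 < C := by linarith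
  refine ⟨(1 - C⁻¹) / B, div_pos (sub_pos.2 (inv_lt_one_of_one_lt₀ hC)) hB, fun r hr => ?_⟩
  set t := 1 - (1 - r) / K
  have hrt := le_one_sub_div hr.2 hK.le
  have ht := one_sub_div_mem_Ico hr hK.le
  have hsplit := hω.integral_add_hat hr.1 hrt ht.2.le
  have hω_piece : (1 - C⁻¹) * hat ω r ≤ ∫ s in r..t, ω s := by
    have hω_tail : hat ω t ≤ C⁻¹ * hat ω r := by
      rw [← div_eq_inv_mul, le_div_iff₀ hC₀, mul_comm]
      exact hreverse r hr
    linarith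
  have hν_tail : hat ν r / B ≤ hat ν t := by
    rw [div_le_iff₀ hB, mul_comm]
    exact hdoubling r hr
  calc (1 - C⁻¹) / B * (hat ω r * hat ν r) = ((1 - C⁻¹) * hat ω r) * (hat ν r / B) := by ring
    _ ≤ (∫ s in r..t, ω s) * hat ν t :=
        mul_le_mul hω_piece hν_tail (div_nonneg (hν.hat_nonneg hr.1 hr.2.le) hB.le)
          (hω.integral_nonneg hr.1 hrt ht.2.le)
    _ ≤ hat (fun s => ω s * hat ν s) r :=
        hω.integral_mul_hat_le_hat_mul_hat hν hr.1 hrt ht.2.le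

theorem mul_hat_mem_Dclass_general (ω ν : ℝ → ℝ)
    (hω_nonneg : ∀ r ∈ Set.Ico (0:ℝ) 1, 0 ≤ ω r)
    (hν_nonneg : ∀ r ∈ Set.Ico (0:ℝ) 1, 0 ≤ ν r)
    (hω_int : IntervalIntegrable ω volume 0 1)
    (hν_int : IntervalIntegrable ν volume 0 1)
    (hω : Dclass ω) (hν : Dhat ν) :
    Dclass (fun r => ω r * hat ν r) ∧
      ∃ c > 0, ∃ C > 0, ∀ r ∈ Set.Ico (0:ℝ) 1,
        c * (hat ω r * hat ν r) ≤ (∫ s in r..1, ω s * hat ν s) ∧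
        (∫ s in r..1, ω s * hat ν s) ≤ C * (hat ω r * hat ν r) := by
  have hω' : IsRadialWeight ω := ⟨hω_nonneg, hω_int⟩
  have hν' : IsRadialWeight ν := ⟨hν_nonneg, hν_int⟩
  obtain ⟨c, hc, hlow⟩ := exists_mul_hat_mul_hat_le_hat_mul_hat hω' hν' hω.2 hν
  have hup : ∀ r ∈ Ico (0:ℝ) 1, hat (fun s => ω s * hat ν s) r ≤ 1 * (hat ω r * hat ν r) :=
    fun r hr => by rw [one_mul]; exact hω'.hat_mul_hat_le hν' hr.1 hr.2.le
  obtain ⟨A, hA, hdoubling⟩ := hω.1.exists_hat_mul_hat_le hω' hν' hν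
  refine ⟨⟨?_, ?_⟩, c, hc, 1, one_pos, fun r hr => ⟨hlow r hr, hup r hr⟩⟩
  · exact Dhat.of_hat_comparable (hω'.mul_hat hν') hc zero_le_one hA hlow hup hdoubling
  · exact Dcheck.of_hat_comparable hc hlow hup (hω.2.exists_mul_hat_mul_hat_le hω' hν')

theorem mul_hat_mem_Dclass (ω ν : ℝ → ℝ)
    (hω_nonneg : ∀ r ∈ Set.Ico (0:ℝ) 1, 0 ≤ ω r)
    (hν_nonneg : ∀ r ∈ Set.Ico (0:ℝ) 1, 0 ≤ ν r)
    (hω_int : IntervalIntegrable ω volume 0 1)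
    (hν_int : IntervalIntegrable ν volume 0 1)
    (hω_pos : ∀ r ∈ Set.Ico (0:ℝ) 1, 0 < hat ω r)
    (hν_pos : ∀ r ∈ Set.Ico (0:ℝ) 1, 0 < hat ν r)
    (hω : Dclass ω) (hν : Dhat ν) :
    Dclass (fun r => ω r * hat ν r) ∧
      ∃ c > 0, ∃ C > 0, ∀ r ∈ Set.Ico (0:ℝ) 1,
        c * (hat ω r * hat ν r) ≤ (∫ s in r..1, ω s * hat ν s) ∧
        (∫ s in r..1, ω s * hat ν s) ≤ C * (hat ω r * hat ν r) :=
  mul_hat_mem_Dclass_general ω ν hω_nonneg hν_nonneg hω_int hν_int hω hν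
end

section
/- Let ω ∈ D and ν ∈ D̂ be radial weights. Then there exists γ₀ = γ₀(ω, ν) > 0 such that for every γ ∈ (0, γ₀], the weight ω(r)/ν̂(r)^γ belongs to D, and there exist constants c, C > 0 with c ω̂(r)/ν̂(r)^γ ≤ ∫_r^1 ω(s)/ν̂(s)^γ ds ≤ C ω̂(r)/ν̂(r)^γ for all r ∈ [0,1). -/
open MeasureTheory

/-!
Put `φ = ν̂ ^ γ` and `X = ω̂ / φ`. Iterating the doubling of `ν̂` gives
`ν̂ r ≤ B ν̂ (1 - (1 - r) / K)` for the parameter `K` of `ω ∈ Ď`, so along one step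
`r ↦ 1 - (1 - r) / K` the function `φ` grows at most by `b = B ^ γ`, while `ω̂` shrinks by the
factor `C` of `ω ∈ Ď`; `γ₀` is chosen so that `b < C`. Cutting `[r, 1)` at the points
`1 - (1 - r) / K ^ j`, the mass of `ω / φ` on the `j`-th piece is at most `b (b / C) ^ j X r`,
and summing the geometric series gives `X ≤ (ω / φ)^ ≤ M X`; the lower bound holds because `φ`
decreases. Both classes pass from `X` to `(ω / φ)^`: `D̂` because `ω̂` is doubling and `φ`
decreases, `Ď` with parameter `K ^ n` for large `n` because `X` decays by `b / C` per step.
-/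

open Set Filter Topology

noncomputable def nearOne (t r : ℝ) : ℝ := 1 - (1 - r) / t

section nearOne

variable {r s t : ℝ}

lemma nearOne_nearOne (s t r : ℝ) : nearOne s (nearOne t r) = nearOne (t * s) r := by
  simp only [nearOne, sub_sub_cancel, div_div]

lemma nearOne_pow_succ (t r : ℝ) (n : ℕ) :
    nearOne (t ^ (n + 1)) r = nearOne t (nearOne (t ^ n) r) := by
  rw [nearOne_nearOne, pow_succ]

lemma le_nearOne (hr : r ≤ 1) (ht : 1 ≤ t) : r ≤ nearOne t r := by
  have : (1 - r) / t ≤ 1 - r := div_le_self (by linarith) ht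
  unfold nearOne; linarith

lemma nearOne_mem_Ico (hr : r ∈ Ico (0:ℝ) 1) (ht : 1 ≤ t) : nearOne t r ∈ Ico (0:ℝ) 1 := by
  have : 0 < (1 - r) / t := div_pos (by linarith [hr.2]) (by linarith)
  exact ⟨hr.1.trans (le_nearOne hr.2.le ht), by unfold nearOne; linarith⟩

lemma nearOne_le_nearOne (hr : r ≤ 1) (hs : 0 < s) (hst : s ≤ t) :
    nearOne s r ≤ nearOne t r := by
  have : (1 - r) / t ≤ (1 - r) / s := div_le_div_of_nonneg_left (by linarith) hs hst
  unfold nearOne; linarith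

lemma exists_le_nearOne_pow {K : ℝ} (ht : t < 1) (hK : 1 < K) (r : ℝ) :
    ∃ n : ℕ, t ≤ nearOne (K ^ n) r := by
  obtain ⟨n, hn⟩ := pow_unbounded_of_one_lt ((1 - r) / (1 - t)) hK
  refine ⟨n, ?_⟩
  have : (1 - r) / K ^ n ≤ 1 - t := by
    rw [div_le_iff₀ (pow_pos (by linarith) n)]
    rw [div_lt_iff₀ (by linarith)] at hn
    linarith
  unfold nearOne; linarith

end nearOne

section Iteration

variable {f : ℝ → ℝ} {c t : ℝ}

lemma le_pow_mul_nearOne_pow (hc : 0 ≤ c) (ht : 1 ≤ t)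
    (h : ∀ r ∈ Ico (0:ℝ) 1, f r ≤ c * f (nearOne t r)) (n : ℕ) :
    ∀ r ∈ Ico (0:ℝ) 1, f r ≤ c ^ n * f (nearOne (t ^ n) r) := by
  induction n with
  | zero => intro r _; simp [nearOne]
  | succ n ih =>
    intro r hr
    calc f r ≤ c ^ n * f (nearOne (t ^ n) r) := ih r hr
      _ ≤ c ^ n * (c * f (nearOne t (nearOne (t ^ n) r))) := by
        gcongr
        exact h _ (nearOne_mem_Ico hr (one_le_pow₀ ht))
      _ = c ^ (n + 1) * f (nearOne (t ^ (n + 1)) r) := by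
        rw [nearOne_pow_succ, pow_succ, mul_assoc]

lemma nearOne_pow_le_pow_mul (hc : 0 ≤ c) (ht : 1 ≤ t)
    (h : ∀ r ∈ Ico (0:ℝ) 1, f (nearOne t r) ≤ c * f r) (n : ℕ) :
    ∀ r ∈ Ico (0:ℝ) 1, f (nearOne (t ^ n) r) ≤ c ^ n * f r := by
  induction n with
  | zero => intro r _; simp [nearOne]
  | succ n ih =>
    intro r hr
    calc f (nearOne (t ^ (n + 1)) r) = f (nearOne t (nearOne (t ^ n) r)) := by
          rw [nearOne_pow_succ]
      _ ≤ c * f (nearOne (t ^ n) r) := h _ (nearOne_mem_Ico hr (one_le_pow₀ ht))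
      _ ≤ c * (c ^ n * f r) := by gcongr; exact ih r hr
      _ = c ^ (n + 1) * f r := by rw [pow_succ]; ring

end Iteration

section Improper

variable {f : ℝ → ℝ} {a b B : ℝ}

lemma IntervalIntegrable.of_forall_integral_le (hab : a < b) (hf : ∀ s ∈ Ico a b, 0 ≤ f s)
    (hfi : ∀ t ∈ Ico a b, IntervalIntegrable f volume a t)
    (hB : ∀ t ∈ Ico a b, ∫ s in a..t, f s ≤ B) : IntervalIntegrable f volume a b := by
  set c : ℕ → ℝ := fun n => b - (b - a) * (1 / ((n : ℝ) + 1))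
  have hc : ∀ n, c n ∈ Ico a b := by
    intro n
    have h0 : 0 < 1 / ((n : ℝ) + 1) := by positivity
    have h1 : 1 / ((n : ℝ) + 1) ≤ 1 := by
      rw [div_le_one (by positivity)]; linarith [n.cast_nonneg (α := ℝ)]
    constructor <;> nlinarith
  have hlim : Tendsto c atTop (𝓝 b) := by
    simpa only [mul_zero, sub_zero] using
      (tendsto_one_div_add_atTop_nhds_zero_nat.const_mul (b - a)).const_sub b
  rw [intervalIntegrable_iff_integrableOn_Ioc_of_le hab.le]
  refine integrableOn_Ioc_of_intervalIntegral_norm_bounded_right (I := B)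
    (fun n => (hfi _ (hc n)).1) hlim (Eventually.of_forall fun n => ?_)
  rw [setIntegral_congr_fun measurableSet_Ioc
      (fun x hx => Real.norm_of_nonneg (hf x ⟨hx.1.le, hx.2.trans_lt (hc n).2⟩)),
    ← intervalIntegral.integral_of_le (hc n).1]
  exact hB _ (hc n)

lemma intervalIntegral.integral_le_of_forall_lt (hab : a < b)
    (hfi : IntervalIntegrable f volume a b) (hB : ∀ t ∈ Ico a b, ∫ s in a..t, f s ≤ B) :
    ∫ s in a..b, f s ≤ B := by
  have hcont := intervalIntegral.continuousOn_primitive_interval' hfi left_mem_uIcc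
  rw [uIcc_of_le hab.le] at hcont
  refine ContinuousWithinAt.closure_le (by rw [closure_Ico hab.ne]; exact right_mem_Icc.2 hab.le)
    ((hcont b (right_mem_Icc.2 hab.le)).mono Ico_subset_Icc_self) continuousWithinAt_const hB

end Improper

section Hat

variable {ω : ℝ → ℝ} {a b : ℝ}

lemma IntervalIntegrable.mono_of_unitInterval (hωi : IntervalIntegrable ω volume 0 1)
    (ha : 0 ≤ a) (hab : a ≤ b) (hb : b ≤ 1) : IntervalIntegrable ω volume a b :=
  hωi.mono_set (by rw [uIcc_of_le hab, uIcc_of_le zero_le_one]; exact Icc_subset_Icc ha hb)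

lemma integral_nonneg_of_unitInterval (hω : ∀ r ∈ Ico (0:ℝ) 1, 0 ≤ ω r)
    (hωi : IntervalIntegrable ω volume 0 1) (ha : 0 ≤ a) (hab : a ≤ b) (hb : b ≤ 1) :
    0 ≤ ∫ s in a..b, ω s := by
  simpa using intervalIntegral.integral_mono_on_of_le_Ioo hab intervalIntegrable_const
    (hωi.mono_of_unitInterval ha hab hb) fun s hs => hω s ⟨ha.trans hs.1.le, hs.2.trans_le hb⟩

lemma hat_eq_integral_add_hat (hωi : IntervalIntegrable ω volume 0 1)
    (ha : 0 ≤ a) (hab : a ≤ b) (hb : b ≤ 1) : hat ω a = (∫ s in a..b, ω s) + hat ω b :=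
  (intervalIntegral.integral_add_adjacent_intervals (hωi.mono_of_unitInterval ha hab hb)
    (hωi.mono_of_unitInterval (ha.trans hab) hb le_rfl)).symm

lemma antitoneOn_hat (hω : ∀ r ∈ Ico (0:ℝ) 1, 0 ≤ ω r)
    (hωi : IntervalIntegrable ω volume 0 1) : AntitoneOn (hat ω) (Icc 0 1) := by
  intro a ha b hb hab
  rw [hat_eq_integral_add_hat hωi ha.1 hab hb.2]
  linarith [integral_nonneg_of_unitInterval hω hωi ha.1 hab hb.2]

lemma hat_nonneg_s9 (hω : ∀ r ∈ Ico (0:ℝ) 1, 0 ≤ ω r)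
    (hωi : IntervalIntegrable ω volume 0 1) (ha : a ∈ Icc (0:ℝ) 1) : 0 ≤ hat ω a :=
  integral_nonneg_of_unitInterval hω hωi ha.1 ha.2 le_rfl

lemma continuousOn_hat (hωi : IntervalIntegrable ω volume 0 1) :
    ContinuousOn (hat ω) (Icc 0 1) := by
  have := intervalIntegral.continuousOn_primitive_interval_left
    ((intervalIntegrable_iff' enorm_ne_top).1 hωi)
  rwa [uIcc_of_le zero_le_one] at this

end Hat

lemma Dhat.exists_hat_le_mul_hat_nearOne {ν : ℝ → ℝ} (h : Dhat ν)
    (hν : ∀ r ∈ Ico (0:ℝ) 1, 0 ≤ ν r) (hνi : IntervalIntegrable ν volume 0 1) {K : ℝ}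
    (hK : 1 ≤ K) : ∃ B > 1, ∀ r ∈ Ico (0:ℝ) 1, hat ν r ≤ B * hat ν (nearOne K r) := by
  obtain ⟨C, hC, hCν⟩ := h
  obtain ⟨L, hL⟩ := pow_unbounded_of_one_lt K one_lt_two
  have hKL : K ≤ 2 ^ (L + 1) := hL.le.trans (pow_le_pow_right₀ one_le_two L.le_succ)
  have h2 : ∀ r ∈ Ico (0:ℝ) 1, hat ν r ≤ C * hat ν (nearOne 2 r) := fun r hr => by
    convert hCν r hr using 3; unfold nearOne; ring
  refine ⟨C ^ (L + 1), one_lt_pow₀ hC L.succ_ne_zero, fun r hr => ?_⟩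
  calc hat ν r ≤ C ^ (L + 1) * hat ν (nearOne (2 ^ (L + 1)) r) :=
        le_pow_mul_nearOne_pow (by linarith) one_le_two h2 _ r hr
    _ ≤ C ^ (L + 1) * hat ν (nearOne K r) := by
        gcongr
        exact antitoneOn_hat hν hνi (Ico_subset_Icc_self (nearOne_mem_Ico hr hK))
          (Ico_subset_Icc_self (nearOne_mem_Ico hr (one_le_pow₀ one_le_two)))
          (nearOne_le_nearOne hr.2.le (by linarith) hKL)

lemma div_le_mul_div_of_le_mul {b x y A : ℝ} (hA : 0 ≤ A) (hx : 0 < x) (hy : 0 < y)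
    (h : x ≤ b * y) : A / y ≤ b * (A / x) := by
  rw [mul_div_assoc', le_div_iff₀ hx, div_mul_eq_mul_div, div_le_iff₀ hy]
  calc A * x ≤ A * (b * y) := by gcongr
    _ = b * A * y := by ring

section Classes

variable {W f : ℝ → ℝ} {M C q K : ℝ}

lemma Dhat_of_le_of_le (hM : 1 ≤ M) (hC : 1 < C)
    (hlow : ∀ r ∈ Ico (0:ℝ) 1, f r ≤ hat W r) (hup : ∀ r ∈ Ico (0:ℝ) 1, hat W r ≤ M * f r)
    (hf : ∀ r ∈ Ico (0:ℝ) 1, f r ≤ C * f ((1 + r) / 2)) : Dhat W := by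
  refine ⟨M * C, one_lt_mul_of_le_of_lt hM hC, fun r hr => ?_⟩
  have hm : (1 + r) / 2 ∈ Ico (0:ℝ) 1 := ⟨by linarith [hr.1], by linarith [hr.2]⟩
  calc hat W r ≤ M * f r := hup r hr
    _ ≤ M * (C * f ((1 + r) / 2)) := by gcongr; exact hf r hr
    _ ≤ M * (C * hat W ((1 + r) / 2)) := by gcongr; exact hlow _ hm
    _ = M * C * hat W ((1 + r) / 2) := by ring

lemma Dcheck_of_le_of_le (hM : 1 ≤ M) (hq0 : 0 ≤ q) (hq1 : q < 1) (hK : 1 < K)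
    (hf0 : ∀ r ∈ Ico (0:ℝ) 1, 0 ≤ f r)
    (hlow : ∀ r ∈ Ico (0:ℝ) 1, f r ≤ hat W r) (hup : ∀ r ∈ Ico (0:ℝ) 1, hat W r ≤ M * f r)
    (hf : ∀ r ∈ Ico (0:ℝ) 1, f (nearOne K r) ≤ q * f r) : Dcheck W := by
  obtain ⟨n, hn⟩ := exists_pow_lt_of_lt_one (by positivity : 0 < 1 / (2 * M)) hq1
  refine ⟨K ^ (n + 1), one_lt_pow₀ hK n.succ_ne_zero, 2, one_lt_two, fun r hr => ?_⟩
  have hqn : 2 * M * q ^ (n + 1) ≤ 1 := by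
    have : q ^ (n + 1) ≤ q ^ n := pow_le_pow_of_le_one hq0 hq1.le n.le_succ
    rw [lt_div_iff₀ (by positivity)] at hn
    nlinarith
  calc 2 * hat W (nearOne (K ^ (n + 1)) r) ≤ 2 * (M * f (nearOne (K ^ (n + 1)) r)) := by
        gcongr; exact hup _ (nearOne_mem_Ico hr (one_le_pow₀ hK.le))
    _ ≤ 2 * (M * (q ^ (n + 1) * f r)) := by
        gcongr; exact nearOne_pow_le_pow_mul hq0 hK.le hf _ r hr
    _ = 2 * M * q ^ (n + 1) * f r := by ring
    _ ≤ 1 * f r := by gcongr; exact hf0 r hr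
    _ ≤ hat W r := by rw [one_mul]; exact hlow r hr

end Classes

section Comparison

variable {ω φ : ℝ → ℝ} {a b r t K C q : ℝ}

lemma intervalIntegrable_div (hωi : IntervalIntegrable ω volume 0 1)
    (hφ_cont : ContinuousOn φ (Ico 0 1)) (hφ_pos : ∀ r ∈ Ico (0:ℝ) 1, 0 < φ r)
    (ha : 0 ≤ a) (hab : a ≤ b) (hb : b < 1) :
    IntervalIntegrable (fun s => ω s / φ s) volume a b := by
  have hsub : uIcc a b ⊆ Ico 0 1 := by
    rw [uIcc_of_le hab]; exact fun s hs => ⟨ha.trans hs.1, hs.2.trans_lt hb⟩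
  simpa only [div_eq_mul_inv, Pi.inv_apply] using
    (hωi.mono_of_unitInterval ha hab hb.le).mul_continuousOn
      ((hφ_cont.mono hsub).inv₀ fun s hs => (hφ_pos s (hsub hs)).ne')

lemma integral_div_le_hat_div (hω : ∀ r ∈ Ico (0:ℝ) 1, 0 ≤ ω r)
    (hωi : IntervalIntegrable ω volume 0 1) (hφ_cont : ContinuousOn φ (Ico 0 1))
    (hφ_pos : ∀ r ∈ Ico (0:ℝ) 1, 0 < φ r) (hφ_anti : AntitoneOn φ (Ico 0 1))
    (ha : 0 ≤ a) (hab : a ≤ b) (hb : b < 1) :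
    ∫ s in a..b, ω s / φ s ≤ hat ω a / φ b := by
  have hmem : ∀ s ∈ Icc a b, s ∈ Ico (0:ℝ) 1 := fun s hs => ⟨ha.trans hs.1, hs.2.trans_lt hb⟩
  calc ∫ s in a..b, ω s / φ s ≤ ∫ s in a..b, ω s / φ b :=
        intervalIntegral.integral_mono_on hab
          (intervalIntegrable_div hωi hφ_cont hφ_pos ha hab hb)
          ((hωi.mono_of_unitInterval ha hab hb.le).div_const _) fun s hs =>
            div_le_div_of_nonneg_left (hω s (hmem s hs)) (hφ_pos b (hmem b (right_mem_Icc.2 hab)))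
              (hφ_anti (hmem s hs) (hmem b (right_mem_Icc.2 hab)) hs.2)
    _ = (∫ s in a..b, ω s) / φ b := intervalIntegral.integral_div _ _
    _ ≤ hat ω a / φ b := by
        gcongr
        · exact (hφ_pos b ⟨ha.trans hab, hb⟩).le
        · rw [hat_eq_integral_add_hat hωi ha hab hb.le]
          linarith [hat_nonneg_s9 hω hωi ⟨ha.trans hab, hb.le⟩]

lemma integral_div_nearOne_le (hω : ∀ r ∈ Ico (0:ℝ) 1, 0 ≤ ω r)
    (hωi : IntervalIntegrable ω volume 0 1) (hφ_cont : ContinuousOn φ (Ico 0 1))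
    (hφ_pos : ∀ r ∈ Ico (0:ℝ) 1, 0 < φ r) (hφ_anti : AntitoneOn φ (Ico 0 1))
    (hK : 1 ≤ K) (hr : r ∈ Ico (0:ℝ) 1) (hφK : φ r ≤ b * φ (nearOne K r)) :
    ∫ s in r..nearOne K r, ω s / φ s ≤ b * (hat ω r / φ r) := by
  have hr' := nearOne_mem_Ico hr hK
  exact (integral_div_le_hat_div hω hωi hφ_cont hφ_pos hφ_anti hr.1 (le_nearOne hr.2.le hK)
    hr'.2).trans (div_le_mul_div_of_le_mul (hat_nonneg_s9 hω hωi ⟨hr.1, hr.2.le⟩) (hφ_pos r hr)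
      (hφ_pos _ hr') hφK)

lemma integral_div_le_of_lt_one (hω : ∀ r ∈ Ico (0:ℝ) 1, 0 ≤ ω r)
    (hωi : IntervalIntegrable ω volume 0 1) (hφ_cont : ContinuousOn φ (Ico 0 1))
    (hφ_pos : ∀ r ∈ Ico (0:ℝ) 1, 0 < φ r) (hφ_anti : AntitoneOn φ (Ico 0 1))
    (hK : 1 < K) (hb : 0 ≤ b) (hq0 : 0 ≤ q) (hq1 : q < 1)
    (hφK : ∀ s ∈ Ico (0:ℝ) 1, φ s ≤ b * φ (nearOne K s))
    (hωφK : ∀ s ∈ Ico (0:ℝ) 1, hat ω (nearOne K s) / φ (nearOne K s) ≤ q * (hat ω s / φ s))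
    (hr : r ∈ Ico (0:ℝ) 1) (ht : t ∈ Ico r 1) :
    ∫ s in r..t, ω s / φ s ≤ b / (1 - q) * (hat ω r / φ r) := by
  set X := hat ω r / φ r
  have hX : 0 ≤ X := div_nonneg (hat_nonneg_s9 hω hωi ⟨hr.1, hr.2.le⟩) (hφ_pos r hr).le
  set R : ℕ → ℝ := fun j => nearOne (K ^ j) r
  have hR : ∀ j, R j ∈ Ico (0:ℝ) 1 := fun j => nearOne_mem_Ico hr (one_le_pow₀ hK.le)
  have hR_succ : ∀ j, R (j + 1) = nearOne K (R j) := fun j => nearOne_pow_succ K r j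
  have hR_mono : ∀ j, R j ≤ R (j + 1) := fun j => by
    rw [hR_succ]; exact le_nearOne (hR j).2.le hK.le
  have hpiece : ∀ j, ∫ s in R j..R (j + 1), ω s / φ s ≤ b * q ^ j * X := fun j => calc
    _ ≤ b * (hat ω (R j) / φ (R j)) := by
          rw [hR_succ]
          exact integral_div_nearOne_le hω hωi hφ_cont hφ_pos hφ_anti hK.le (hR j) (hφK _ (hR j))
    _ ≤ b * (q ^ j * X) := by
          gcongr
          exact nearOne_pow_le_pow_mul (f := fun s => hat ω s / φ s) hq0 hK.le hωφK j r hr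
    _ = b * q ^ j * X := by ring
  obtain ⟨N, hN⟩ := exists_le_nearOne_pow ht.2 hK r
  have hRN := hR N
  calc ∫ s in r..t, ω s / φ s ≤ ∫ s in r..R N, ω s / φ s :=
        intervalIntegral.integral_mono_interval le_rfl ht.1 hN
          ((ae_restrict_iff' measurableSet_Ioc).2 (ae_of_all _ fun s hs =>
            div_nonneg (hω s ⟨hr.1.trans hs.1.le, hs.2.trans_lt hRN.2⟩)
              (hφ_pos s ⟨hr.1.trans hs.1.le, hs.2.trans_lt hRN.2⟩).le))
          (intervalIntegrable_div hωi hφ_cont hφ_pos hr.1 (ht.1.trans hN) hRN.2)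
    _ = ∑ j ∈ Finset.range N, ∫ s in R j..R (j + 1), ω s / φ s := by
        rw [intervalIntegral.sum_integral_adjacent_intervals fun j _ =>
          intervalIntegrable_div hωi hφ_cont hφ_pos (hR j).1 (hR_mono j) (hR (j + 1)).2]
        simp [R, nearOne]
    _ ≤ ∑ j ∈ Finset.range N, b * q ^ j * X := Finset.sum_le_sum fun j _ => hpiece j
    _ = b * X * ∑ j ∈ Finset.Ico 0 N, q ^ j := by
        rw [Finset.mul_sum, Finset.range_eq_Ico]
        exact Finset.sum_congr rfl fun j _ => by ring
    _ ≤ b * X * (q ^ 0 / (1 - q)) := by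
        gcongr
        exact geom_sum_Ico_le_of_lt_one hq0 hq1
    _ = b / (1 - q) * X := by ring

lemma intervalIntegrable_div_and_hat_div_le (hω : ∀ r ∈ Ico (0:ℝ) 1, 0 ≤ ω r)
    (hωi : IntervalIntegrable ω volume 0 1) (hφ_cont : ContinuousOn φ (Ico 0 1))
    (hφ_pos : ∀ r ∈ Ico (0:ℝ) 1, 0 < φ r) (hφ_anti : AntitoneOn φ (Ico 0 1))
    (hK : 1 < K) (hb : 0 ≤ b) (hq0 : 0 ≤ q) (hq1 : q < 1)
    (hφK : ∀ s ∈ Ico (0:ℝ) 1, φ s ≤ b * φ (nearOne K s))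
    (hωφK : ∀ s ∈ Ico (0:ℝ) 1, hat ω (nearOne K s) / φ (nearOne K s) ≤ q * (hat ω s / φ s))
    (hr : r ∈ Ico (0:ℝ) 1) :
    IntervalIntegrable (fun s => ω s / φ s) volume r 1 ∧
      hat (fun s => ω s / φ s) r ≤ b / (1 - q) * (hat ω r / φ r) := by
  have hbound := fun t (ht : t ∈ Ico r 1) => integral_div_le_of_lt_one hω hωi hφ_cont hφ_pos
    hφ_anti hK hb hq0 hq1 hφK hωφK hr ht
  have hmem : ∀ s ∈ Ico r 1, s ∈ Ico (0:ℝ) 1 := fun s hs => ⟨hr.1.trans hs.1, hs.2⟩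
  have hint := IntervalIntegrable.of_forall_integral_le hr.2
    (fun s hs => div_nonneg (hω s (hmem s hs)) (hφ_pos s (hmem s hs)).le)
    (fun t ht => intervalIntegrable_div hωi hφ_cont hφ_pos hr.1 ht.1 ht.2) hbound
  exact ⟨hint, intervalIntegral.integral_le_of_forall_lt hr.2 hint hbound⟩

lemma hat_div_le_hat_div (hω : ∀ r ∈ Ico (0:ℝ) 1, 0 ≤ ω r)
    (hωi : IntervalIntegrable ω volume 0 1) (hφ_pos : ∀ r ∈ Ico (0:ℝ) 1, 0 < φ r)
    (hφ_anti : AntitoneOn φ (Ico 0 1)) (hr : r ∈ Ico (0:ℝ) 1)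
    (hi : IntervalIntegrable (fun s => ω s / φ s) volume r 1) :
    hat ω r / φ r ≤ hat (fun s => ω s / φ s) r := by
  have hmem : ∀ s ∈ Ioo r 1, s ∈ Ico (0:ℝ) 1 := fun s hs => ⟨hr.1.trans hs.1.le, hs.2⟩
  calc hat ω r / φ r = ∫ s in r..1, ω s / φ r := (intervalIntegral.integral_div _ _).symm
    _ ≤ hat (fun s => ω s / φ s) r :=
        intervalIntegral.integral_mono_on_of_le_Ioo hr.2.le
          ((hωi.mono_of_unitInterval hr.1 hr.2.le le_rfl).div_const _) hi fun s hs =>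
            div_le_div_of_nonneg_left (hω s (hmem s hs)) (hφ_pos s (hmem s hs))
              (hφ_anti hr (hmem s hs) hs.1.le)

lemma hat_div_nearOne_le (hω : ∀ r ∈ Ico (0:ℝ) 1, 0 ≤ ω r)
    (hωi : IntervalIntegrable ω volume 0 1) (hφ_pos : ∀ r ∈ Ico (0:ℝ) 1, 0 < φ r)
    (hC : 0 < C) (hK : 1 ≤ K) (hr : r ∈ Ico (0:ℝ) 1) (hφK : φ r ≤ b * φ (nearOne K r))
    (hωK : C * hat ω (nearOne K r) ≤ hat ω r) :
    hat ω (nearOne K r) / φ (nearOne K r) ≤ b / C * (hat ω r / φ r) := by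
  have hr' := nearOne_mem_Ico hr hK
  calc hat ω (nearOne K r) / φ (nearOne K r) ≤ hat ω r / C / φ (nearOne K r) := by
        gcongr
        · exact (hφ_pos _ hr').le
        · rwa [le_div_iff₀ hC, mul_comm]
    _ ≤ b * (hat ω r / C / φ r) := div_le_mul_div_of_le_mul
        (div_nonneg (hat_nonneg_s9 hω hωi ⟨hr.1, hr.2.le⟩) hC.le) (hφ_pos r hr) (hφ_pos _ hr') hφK
    _ = b / C * (hat ω r / φ r) := by ring

lemma exists_hat_div_comparable (hω : ∀ r ∈ Ico (0:ℝ) 1, 0 ≤ ω r)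
    (hωi : IntervalIntegrable ω volume 0 1) (hφ_cont : ContinuousOn φ (Ico 0 1))
    (hφ_pos : ∀ r ∈ Ico (0:ℝ) 1, 0 < φ r) (hφ_anti : AntitoneOn φ (Ico 0 1))
    (hK : 1 < K) (hb : 1 ≤ b) (hbC : b < C)
    (hφK : ∀ r ∈ Ico (0:ℝ) 1, φ r ≤ b * φ (nearOne K r))
    (hωK : ∀ r ∈ Ico (0:ℝ) 1, C * hat ω (nearOne K r) ≤ hat ω r) :
    ∃ M ≥ 1, ∀ r ∈ Ico (0:ℝ) 1, hat ω r / φ r ≤ hat (fun s => ω s / φ s) r ∧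
      hat (fun s => ω s / φ s) r ≤ M * (hat ω r / φ r) := by
  have hC : 0 < C := by linarith
  have hq0 : 0 ≤ b / C := by positivity
  have hq1 : b / C < 1 := (div_lt_one hC).2 hbC
  refine ⟨b / (1 - b / C), by rw [ge_iff_le, le_div_iff₀ (by linarith)]; nlinarith, fun r hr => ?_⟩
  obtain ⟨hint, hup⟩ := intervalIntegrable_div_and_hat_div_le hω hωi hφ_cont hφ_pos hφ_anti hK
    (by linarith) hq0 hq1 hφK
    (fun s hs => hat_div_nearOne_le hω hωi hφ_pos hC hK.le hs (hφK s hs) (hωK s hs)) hr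
  exact ⟨hat_div_le_hat_div hω hωi hφ_pos hφ_anti hr hint, hup⟩

lemma Dclass_div (hω : ∀ r ∈ Ico (0:ℝ) 1, 0 ≤ ω r)
    (hωi : IntervalIntegrable ω volume 0 1) (hφ_cont : ContinuousOn φ (Ico 0 1))
    (hφ_pos : ∀ r ∈ Ico (0:ℝ) 1, 0 < φ r) (hφ_anti : AntitoneOn φ (Ico 0 1))
    (hK : 1 < K) (hb : 1 ≤ b) (hbC : b < C)
    (hφK : ∀ r ∈ Ico (0:ℝ) 1, φ r ≤ b * φ (nearOne K r))
    (hω_hat : Dhat ω) (hωK : ∀ r ∈ Ico (0:ℝ) 1, C * hat ω (nearOne K r) ≤ hat ω r) :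
    Dclass (fun s => ω s / φ s) := by
  obtain ⟨Cω, hCω, hωCω⟩ := hω_hat
  obtain ⟨M, hM, hcomp⟩ :=
    exists_hat_div_comparable hω hωi hφ_cont hφ_pos hφ_anti hK hb hbC hφK hωK
  have hC : 0 < C := by linarith
  have hX0 : ∀ r ∈ Ico (0:ℝ) 1, 0 ≤ hat ω r / φ r := fun r hr =>
    div_nonneg (hat_nonneg_s9 hω hωi ⟨hr.1, hr.2.le⟩) (hφ_pos r hr).le
  have hX_mid : ∀ r ∈ Ico (0:ℝ) 1,
      hat ω r / φ r ≤ Cω * (hat ω ((1 + r) / 2) / φ ((1 + r) / 2)) := fun r hr => by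
    have hm : (1 + r) / 2 ∈ Ico (0:ℝ) 1 := ⟨by linarith [hr.1], by linarith [hr.2]⟩
    rw [mul_div_assoc']
    exact div_le_div₀ (mul_nonneg (by linarith) (hat_nonneg_s9 hω hωi ⟨hm.1, hm.2.le⟩))
      (hωCω r hr) (hφ_pos _ hm) (hφ_anti hr hm (by linarith [hr.2]))
  exact ⟨Dhat_of_le_of_le hM hCω (fun r hr => (hcomp r hr).1) (fun r hr => (hcomp r hr).2) hX_mid,
    Dcheck_of_le_of_le hM (by positivity) ((div_lt_one hC).2 hbC) hK hX0
      (fun r hr => (hcomp r hr).1) (fun r hr => (hcomp r hr).2)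
      fun r hr => hat_div_nearOne_le hω hωi hφ_pos hC hK.le hr (hφK r hr) (hωK r hr)⟩

end Comparison

theorem div_hat_pow_mem_Dclass_general (ω ν : ℝ → ℝ)
    (hω_nonneg : ∀ r ∈ Set.Ico (0:ℝ) 1, 0 ≤ ω r)
    (hν_nonneg : ∀ r ∈ Set.Ico (0:ℝ) 1, 0 ≤ ν r)
    (hω_int : IntervalIntegrable ω volume 0 1)
    (hν_int : IntervalIntegrable ν volume 0 1)
    (hν_pos : ∀ r ∈ Set.Ico (0:ℝ) 1, 0 < hat ν r)
    (hω : Dclass ω) (hν : Dhat ν) :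
    ∃ γ₀ > 0, ∀ γ ∈ Set.Ioc (0:ℝ) γ₀,
      Dclass (fun r => ω r / hat ν r ^ γ) ∧
      ∃ c > 0, ∃ C > 0, ∀ r ∈ Set.Ico (0:ℝ) 1,
        c * (hat ω r / hat ν r ^ γ) ≤ (∫ s in r..1, ω s / hat ν s ^ γ) ∧
        (∫ s in r..1, ω s / hat ν s ^ γ) ≤ C * (hat ω r / hat ν r ^ γ) := by
  obtain ⟨hω_hat, K, hK, Cc, hCc, hω_check⟩ := hω
  obtain ⟨B, hB, hνK⟩ := hν.exists_hat_le_mul_hat_nearOne hν_nonneg hν_int hK.le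
  have hlogb := Real.logb_pos hB hCc
  refine ⟨Real.logb B Cc / 2, by positivity, fun γ hγ => ?_⟩
  have hb : B ^ γ < Cc := calc
    B ^ γ < B ^ Real.logb B Cc := Real.rpow_lt_rpow_of_exponent_lt hB (by linarith [hγ.2])
    _ = Cc := Real.rpow_logb (by linarith) hB.ne' (by linarith)
  have hφ_anti : AntitoneOn (fun r => hat ν r ^ γ) (Ico 0 1) := fun r hr s hs hrs =>
    Real.rpow_le_rpow (hν_pos s hs).le (antitoneOn_hat hν_nonneg hν_int
      (Ico_subset_Icc_self hr) (Ico_subset_Icc_self hs) hrs) hγ.1.le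
  have hφ_cont : ContinuousOn (fun r => hat ν r ^ γ) (Ico 0 1) :=
    ((continuousOn_hat hν_int).mono Ico_subset_Icc_self).rpow_const fun _ _ => Or.inr hγ.1.le
  have hφK : ∀ r ∈ Ico (0:ℝ) 1, hat ν r ^ γ ≤ B ^ γ * hat ν (nearOne K r) ^ γ := fun r hr => by
    rw [← Real.mul_rpow (by linarith) (hν_pos _ (nearOne_mem_Ico hr hK.le)).le]
    exact Real.rpow_le_rpow (hν_pos r hr).le (hνK r hr) hγ.1.le
  have hφ_pos : ∀ r ∈ Ico (0:ℝ) 1, 0 < hat ν r ^ γ := fun r hr =>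
    Real.rpow_pos_of_pos (hν_pos r hr) γ
  have hb1 : 1 ≤ B ^ γ := Real.one_le_rpow hB.le hγ.1.le
  obtain ⟨M, hM, hcomp⟩ := exists_hat_div_comparable hω_nonneg hω_int hφ_cont hφ_pos hφ_anti hK
    hb1 hb hφK hω_check
  refine ⟨Dclass_div hω_nonneg hω_int hφ_cont hφ_pos hφ_anti hK hb1 hb hφK hω_hat hω_check,
    1, one_pos, M, by positivity, fun r hr =>
      ⟨by rw [one_mul]; exact (hcomp r hr).1, (hcomp r hr).2⟩⟩

theorem div_hat_pow_mem_Dclass (ω ν : ℝ → ℝ)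
    (hω_nonneg : ∀ r ∈ Set.Ico (0:ℝ) 1, 0 ≤ ω r)
    (hν_nonneg : ∀ r ∈ Set.Ico (0:ℝ) 1, 0 ≤ ν r)
    (hω_int : IntervalIntegrable ω volume 0 1)
    (hν_int : IntervalIntegrable ν volume 0 1)
    (hω_pos : ∀ r ∈ Set.Ico (0:ℝ) 1, 0 < hat ω r)
    (hν_pos : ∀ r ∈ Set.Ico (0:ℝ) 1, 0 < hat ν r)
    (hω : Dclass ω) (hν : Dhat ν) :
    ∃ γ₀ > 0, ∀ γ ∈ Set.Ioc (0:ℝ) γ₀,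
      Dclass (fun r => ω r / hat ν r ^ γ) ∧
      ∃ c > 0, ∃ C > 0, ∀ r ∈ Set.Ico (0:ℝ) 1,
        c * (hat ω r / hat ν r ^ γ) ≤ (∫ s in r..1, ω s / hat ν s ^ γ) ∧
        (∫ s in r..1, ω s / hat ν s ^ γ) ≤ C * (hat ω r / hat ν r ^ γ) :=
  div_hat_pow_mem_Dclass_general ω ν hω_nonneg hν_nonneg hω_int hν_int hν_pos hω hν
end

section
/- A radial weight ω belongs to Ď if and only if there exist constants C > 0 and α₀ > 0 such that for all α ∈ (0, α₀], ω̂(t) ≤ C ((1-t)/(1-r))^α ω̂(r) for all 0 ≤ r ≤ t < 1. -/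
open MeasureTheory

/-! Iterating the Ď inequality gives `C ^ n * ω̂(1 - (1 - r) / K ^ n) ≤ ω̂(r)`. Choosing `n` with
`K ^ n ≤ (1 - r) / (1 - t) < K ^ (n + 1)` and using that `ω̂` is decreasing yields the power bound
with exponent `log_K C`, and every smaller exponent works since `(1 - t) / (1 - r) ≤ 1`.
Conversely, the power bound at `t = 1 - (1 - r) / K`, with `K` so large that `C K ^ (-α) ≤ 1 / 2`,
is the Ď inequality with constant `2`. -/

open Filter

lemma one_sub_div_mem_Ico_s10 {r c : ℝ} (hr : r ∈ Set.Ico (0:ℝ) 1) (hc : 1 ≤ c) :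
    1 - (1 - r) / c ∈ Set.Ico (0:ℝ) 1 := by
  have h1r : 0 < 1 - r := by linarith [hr.2]
  constructor
  · linarith [div_le_self h1r.le hc, hr.1]
  · linarith [div_pos h1r (zero_lt_one.trans_le hc)]

section TailIntegral

variable {ω : ℝ → ℝ}

lemma integral_nonneg_of_nonneg_on_Ico (hω_nonneg : ∀ r ∈ Set.Ico (0:ℝ) 1, 0 ≤ ω r)
    {a b : ℝ} (ha : 0 ≤ a) (hab : a ≤ b) (hb : b ≤ 1) : 0 ≤ ∫ s in a..b, ω s := by
  refine intervalIntegral.integral_nonneg_of_ae_restrict hab ?_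
  -- nothing is known about `ω 1`, so discard the endpoints
  rw [← Measure.restrict_congr_set Ioo_ae_eq_Icc]
  exact ae_restrict_of_forall_mem measurableSet_Ioo fun x hx =>
    hω_nonneg x ⟨ha.trans hx.1.le, hx.2.trans_le hb⟩

lemma hat_nonneg_s10 (hω_nonneg : ∀ r ∈ Set.Ico (0:ℝ) 1, 0 ≤ ω r) {r : ℝ} (hr0 : 0 ≤ r)
    (hr1 : r ≤ 1) : 0 ≤ hat ω r :=
  integral_nonneg_of_nonneg_on_Ico hω_nonneg hr0 hr1 le_rfl

lemma hat_antitoneOn_s10 (hω_nonneg : ∀ r ∈ Set.Ico (0:ℝ) 1, 0 ≤ ω r)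
    (hω_int : IntervalIntegrable ω volume 0 1) : AntitoneOn (hat ω) (Set.Icc 0 1) := by
  intro r hr t ht hrt
  have hsplit : (∫ s in r..t, ω s) + hat ω t = hat ω r :=
    intervalIntegral.integral_add_adjacent_intervals
      (hω_int.mono_set (Set.uIcc_subset_uIcc (Set.mem_uIcc_of_le hr.1 hr.2)
        (Set.mem_uIcc_of_le ht.1 ht.2)))
      (hω_int.mono_set (Set.uIcc_subset_uIcc (Set.mem_uIcc_of_le ht.1 ht.2) Set.right_mem_uIcc))
  linarith [integral_nonneg_of_nonneg_on_Ico hω_nonneg hr.1 hrt ht.2]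

lemma hat_iterate {K C : ℝ} (hK : 1 ≤ K) (hC : 0 ≤ C)
    (h : ∀ r ∈ Set.Ico (0:ℝ) 1, C * hat ω (1 - (1 - r) / K) ≤ hat ω r) (n : ℕ) :
    ∀ r ∈ Set.Ico (0:ℝ) 1, C ^ n * hat ω (1 - (1 - r) / K ^ n) ≤ hat ω r := by
  induction n with
  | zero => simp
  | succ n ih =>
    intro r hr
    have hstep := ih _ (one_sub_div_mem_Ico_s10 hr hK)
    rw [sub_sub_cancel, div_div, ← pow_succ'] at hstep
    calc C ^ (n + 1) * hat ω (1 - (1 - r) / K ^ (n + 1))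
        = C * (C ^ n * hat ω (1 - (1 - r) / K ^ (n + 1))) := by ring
      _ ≤ C * hat ω (1 - (1 - r) / K) := mul_le_mul_of_nonneg_left hstep hC
      _ ≤ hat ω r := h r hr

lemma pow_mul_hat_le_of_Dcheck (hω_nonneg : ∀ r ∈ Set.Ico (0:ℝ) 1, 0 ≤ ω r)
    (hω_int : IntervalIntegrable ω volume 0 1) {K C : ℝ} (hK : 1 ≤ K) (hC : 0 ≤ C)
    (h : ∀ r ∈ Set.Ico (0:ℝ) 1, C * hat ω (1 - (1 - r) / K) ≤ hat ω r) {n : ℕ} {r t : ℝ}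
    (hr : 0 ≤ r) (ht : t < 1) (hn : K ^ n * (1 - t) ≤ 1 - r) :
    C ^ n * hat ω t ≤ hat ω r := by
  have hKn : 1 ≤ K ^ n := one_le_pow₀ hK
  have hr1 : r < 1 := by nlinarith
  have hs := one_sub_div_mem_Ico_s10 ⟨hr, hr1⟩ hKn
  have hst : 1 - (1 - r) / K ^ n ≤ t := by
    rw [sub_le_comm, le_div_iff₀ (by positivity)]
    linarith
  calc C ^ n * hat ω t ≤ C ^ n * hat ω (1 - (1 - r) / K ^ n) :=
        mul_le_mul_of_nonneg_left
          (hat_antitoneOn_s10 hω_nonneg hω_int (Set.Ico_subset_Icc_self hs)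
            ⟨hs.1.trans hst, ht.le⟩ hst) (by positivity)
    _ ≤ hat ω r := hat_iterate hK hC h n r ⟨hr, hr1⟩

lemma one_le_pow_mul_rpow_logb {K C y : ℝ} (hK : 1 < K) (hC : 1 ≤ C) (hy : 0 ≤ y) {n : ℕ}
    (hn : 1 ≤ K ^ n * y) : 1 ≤ C ^ n * y ^ Real.logb K C := by
  calc 1 ≤ (K ^ n * y) ^ Real.logb K C := Real.one_le_rpow hn (Real.logb_nonneg hK hC)
    _ = C ^ n * y ^ Real.logb K C := by
      rw [Real.mul_rpow (by positivity) hy, ← Real.rpow_pow_comm (by positivity),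
        Real.rpow_logb (by positivity) hK.ne' (by positivity)]

lemma hat_le_mul_rpow_of_Dcheck (hω_nonneg : ∀ r ∈ Set.Ico (0:ℝ) 1, 0 ≤ ω r)
    (hω_int : IntervalIntegrable ω volume 0 1) {K C : ℝ} (hK : 1 < K) (hC : 1 ≤ C)
    (h : ∀ r ∈ Set.Ico (0:ℝ) 1, C * hat ω (1 - (1 - r) / K) ≤ hat ω r) {α : ℝ}
    (hα : α ≤ Real.logb K C) {r t : ℝ} (hr : 0 ≤ r) (hrt : r ≤ t) (ht : t < 1) :
    hat ω t ≤ C * ((1 - t) / (1 - r)) ^ α * hat ω r := by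
  have h1t : 0 < 1 - t := by linarith
  have h1r : 0 < 1 - r := by linarith
  obtain ⟨n, hn_le, hn_lt⟩ :=
    exists_nat_pow_near ((one_le_div h1t).2 (by linarith : 1 - t ≤ 1 - r)) hK
  rw [le_div_iff₀ h1t] at hn_le
  rw [div_lt_iff₀ h1t] at hn_lt
  set y := (1 - t) / (1 - r) with hy
  have hy0 : 0 < y := div_pos h1t h1r
  have hy1 : y ≤ 1 := (div_le_one h1r).2 (by linarith)
  have hbound : 1 ≤ C ^ (n + 1) * y ^ Real.logb K C := by
    refine one_le_pow_mul_rpow_logb hK hC hy0.le ?_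
    rw [hy, mul_div_assoc', le_div_iff₀ h1r]
    linarith
  have hhat_t := hat_nonneg_s10 hω_nonneg (hr.trans hrt) ht.le
  calc hat ω t ≤ C ^ (n + 1) * y ^ Real.logb K C * hat ω t := le_mul_of_one_le_left hhat_t hbound
    _ = C * y ^ Real.logb K C * (C ^ n * hat ω t) := by ring
    _ ≤ C * y ^ Real.logb K C * hat ω r :=
        mul_le_mul_of_nonneg_left
          (pow_mul_hat_le_of_Dcheck hω_nonneg hω_int hK.le (by linarith) h hr ht hn_le)
          (by positivity)
    _ ≤ C * y ^ α * hat ω r := by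
        gcongr C * ?_ * _
        · exact hat_nonneg_s10 hω_nonneg hr (by linarith)
        · exact Real.rpow_le_rpow_of_exponent_ge hy0 hy1 hα

lemma Dcheck_of_hat_le_mul_rpow (hω_nonneg : ∀ r ∈ Set.Ico (0:ℝ) 1, 0 ≤ ω r) {C α : ℝ}
    (hα : 0 < α)
    (h : ∀ r t : ℝ, 0 ≤ r → r ≤ t → t < 1 → hat ω t ≤ C * ((1 - t) / (1 - r)) ^ α * hat ω r) :
    Dcheck ω := by
  obtain ⟨K, hKα, hK⟩ :=
    (((tendsto_rpow_atTop hα).eventually_ge_atTop (2 * C)).and (eventually_gt_atTop 1)).exists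
  refine ⟨K, hK, 2, one_lt_two, fun r hr => ?_⟩
  have h1r : 0 < 1 - r := by linarith [hr.2]
  have ht := one_sub_div_mem_Ico_s10 hr hK.le
  have hrt : r ≤ 1 - (1 - r) / K := by linarith [div_le_self h1r.le hK.le]
  have hratio : (1 - (1 - (1 - r) / K)) / (1 - r) = K⁻¹ := by
    field_simp
    ring
  have hC : C * (K ^ α)⁻¹ ≤ 1 / 2 := by
    rw [← div_eq_mul_inv, div_le_iff₀ (by positivity)]
    linarith
  have hbound := h r _ hr.1 hrt ht.2
  rw [hratio, Real.inv_rpow (by positivity)] at hbound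
  calc 2 * hat ω (1 - (1 - r) / K) ≤ 2 * (C * (K ^ α)⁻¹ * hat ω r) := by gcongr
    _ ≤ 2 * (1 / 2 * hat ω r) := by gcongr; exact hat_nonneg_s10 hω_nonneg hr.1 hr.2.le
    _ = hat ω r := by ring

end TailIntegral

theorem Dcheck_iff_pointwise_general (ω : ℝ → ℝ)
    (hω_nonneg : ∀ r ∈ Set.Ico (0:ℝ) 1, 0 ≤ ω r)
    (hω_int : IntervalIntegrable ω volume 0 1) :
    Dcheck ω ↔
      ∃ C > 0, ∃ α₀ > 0, ∀ α ∈ Set.Ioc (0:ℝ) α₀, ∀ r t : ℝ, 0 ≤ r → r ≤ t → t < 1 →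
        hat ω t ≤ C * ((1 - t) / (1 - r)) ^ α * hat ω r := by
  constructor
  · rintro ⟨K, hK, C, hC, h⟩
    refine ⟨C, by positivity, Real.logb K C, Real.logb_pos hK hC, ?_⟩
    rintro α ⟨-, hα⟩ r t hr hrt ht
    exact hat_le_mul_rpow_of_Dcheck hω_nonneg hω_int hK hC.le h hα hr hrt ht
  · rintro ⟨C, -, α₀, hα₀, h⟩
    exact Dcheck_of_hat_le_mul_rpow hω_nonneg hα₀ (h α₀ ⟨hα₀, le_rfl⟩)

theorem Dcheck_iff_pointwise (ω : ℝ → ℝ)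
    (hω_nonneg : ∀ r ∈ Set.Ico (0:ℝ) 1, 0 ≤ ω r)
    (hω_int : IntervalIntegrable ω volume 0 1)
    (hω_pos : ∀ r ∈ Set.Ico (0:ℝ) 1, 0 < hat ω r) :
    Dcheck ω ↔
      ∃ C > 0, ∃ α₀ > 0, ∀ α ∈ Set.Ioc (0:ℝ) α₀, ∀ r t : ℝ, 0 ≤ r → r ≤ t → t < 1 →
        hat ω t ≤ C * ((1 - t) / (1 - r)) ^ α * hat ω r :=
  Dcheck_iff_pointwise_general ω hω_nonneg hω_int
end
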